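/- arXiv:1704.01772 — 4 statements merged into one kernel-verified Lean document; each statement's English description precedes it below -/
import Mathlib

section
/- For every R with 1 ≤ R ≤ A, the operator d_R = ∑_{S ⊆ {1,...,A}, |S| = R} ∏_{μ∈S} ∂/∂z_μ annihilates the Vandermonde polynomial: d_R ( ∏_{1≤μ<ν≤A} (z_μ − z_ν) ) = 0. -/
/-!
The operator `d_R` commutes with permutations of the variables and the Vandermonde polynomial is
alternating, so `d_R` of it is alternating as well: a monomial with a nonzero coefficient has
pairwise distinct exponents, hence degree at least `A.choose 2`. But `d_R` lowers degrees by
`R ≥ 1` and the Vandermonde polynomial has degree `A.choose 2`, so no monomial survives.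
-/

open MvPolynomial

/-- The Vandermonde (Jastrow) polynomial `∏_{μ<ν} (z_μ - z_ν)` in `A` variables over `ℂ`. -/
noncomputable def vand (A : ℕ) : MvPolynomial (Fin A) ℂ :=
  ∏ p ∈ Finset.univ.filter (fun p : Fin A × Fin A => p.1 < p.2), (X p.1 - X p.2)

/-- Application of the product of derivative operators `∏_μ ∂_μ^{n_μ}` to a polynomial. -/
noncomputable def pdPow {A : ℕ} (n : Fin A → ℕ) (P : MvPolynomial (Fin A) ℂ) :
    MvPolynomial (Fin A) ℂ :=
  (List.finRange A).foldr (fun μ Q => (fun Q' => pderiv μ Q')^[n μ] Q) P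

namespace MvPolynomial

variable {σ R : Type*} [CommSemiring R]

theorem pderiv_pderiv_comm (i j : σ) (p : MvPolynomial σ R) :
    pderiv i (pderiv j p) = pderiv j (pderiv i p) := by
  rcases eq_or_ne i j with rfl | hij
  · rfl
  ext m
  simp only [coeff_pderiv, Finsupp.add_apply, Finsupp.single_eq_of_ne hij,
    Finsupp.single_eq_of_ne hij.symm, add_zero]
  rw [add_right_comm m (Finsupp.single i 1)]
  ring

theorem add_single_mem_support_of_mem_support_iterate_pderiv {i : σ} {k : ℕ}
    {p : MvPolynomial σ R} {m : σ →₀ ℕ} (hm : m ∈ ((pderiv i)^[k] p).support) :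
    m + Finsupp.single i k ∈ p.support := by
  induction k generalizing m with
  | zero => simpa using hm
  | succ k ih =>
    rw [Function.iterate_succ_apply', mem_support_iff, coeff_pderiv] at hm
    have := ih (mem_support_iff.mpr (left_ne_zero_of_mul hm))
    rwa [add_assoc, ← Finsupp.single_add, add_comm 1] at this

theorem choose_two_le_degree_of_injective [Fintype σ] {m : σ →₀ ℕ}
    (hm : Function.Injective m) : (Fintype.card σ).choose 2 ≤ m.degree := by
  classical
  have hcast : Function.Injective fun i => (m i : ℤ) := Nat.cast_injective.comp hm
  have h := Finset.sum_range_le_sum (s := Finset.univ.image fun i => (m i : ℤ)) (c := 0)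
    (by simp)
  rw [Finset.sum_image fun _ _ _ _ h => hcast h, Finset.card_image_of_injective _ hcast,
    Finset.card_univ] at h
  simp only [zero_add] at h
  rw [← Nat.cast_sum, ← Nat.cast_sum, Nat.cast_le] at h
  rwa [Finsupp.degree_eq_sum, Nat.choose_two_right, ← Finset.sum_range_id]

theorem coeff_eq_zero_of_rename_swap_eq_neg {R : Type*} [CommRing R] [NoZeroDivisors R]
    [CharZero R] [DecidableEq σ] {p : MvPolynomial σ R} {i j : σ}
    (hp : rename (Equiv.swap i j) p = -p) {m : σ →₀ ℕ} (hm : m i = m j) : coeff m p = 0 := by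
  have hswap : Finsupp.mapDomain (Equiv.swap i j) m = m := by
    ext k
    rw [Finsupp.mapDomain_equiv_apply, Equiv.symm_swap, Equiv.swap_apply_def]
    split_ifs <;> simp_all
  have h := coeff_rename_mapDomain _ (Equiv.swap i j).injective p m
  rw [hswap, hp, coeff_neg, neg_eq_iff_add_eq_zero] at h
  exact add_self_eq_zero.mp h

/-- `pdPow n` is `iterPDerivs n (List.finRange A)` up to eta-reduction. -/
noncomputable def iterPDerivs (n : σ → ℕ) (l : List σ) (p : MvPolynomial σ R) :
    MvPolynomial σ R :=
  l.foldr (fun μ q => (pderiv μ)^[n μ] q) p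

theorem apply_iterPDerivs_of_semiconj {τ : Type*} {g : MvPolynomial σ R → MvPolynomial τ R}
    {f : σ → τ} (hg : ∀ μ, Function.Semiconj g (pderiv μ) (pderiv (f μ))) (n : τ → ℕ)
    (l : List σ) (p : MvPolynomial σ R) :
    g (iterPDerivs (n ∘ f) l p) = iterPDerivs n (l.map f) (g p) := by
  induction l with
  | nil => rfl
  | cons μ l ih => exact ((hg μ).iterate_right _ _).trans (congrArg _ ih)

theorem iterPDerivs_perm (n : σ → ℕ) {l₁ l₂ : List σ} (h : l₁.Perm l₂) (p : MvPolynomial σ R) :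
    iterPDerivs n l₁ p = iterPDerivs n l₂ p := by
  have : LeftCommutative fun μ (q : MvPolynomial σ R) => (pderiv μ)^[n μ] q :=
    ⟨fun μ ν => Function.Commute.iterate_iterate (pderiv_pderiv_comm μ ν) _ _⟩
  exact h.foldr_eq p

theorem degree_add_sum_le_totalDegree_of_mem_support_iterPDerivs {n : σ → ℕ} {l : List σ}
    {p : MvPolynomial σ R} {m : σ →₀ ℕ} (hm : m ∈ (iterPDerivs n l p).support) :
    m.degree + (l.map n).sum ≤ p.totalDegree := by
  induction l generalizing m with
  | nil =>
    rw [List.map_nil, List.sum_nil, add_zero, Finsupp.degree_apply]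
    exact le_totalDegree hm
  | cons μ l ih =>
    have := ih (add_single_mem_support_of_mem_support_iterate_pderiv hm)
    simp only [map_add, Finsupp.degree_single] at this
    simp only [List.map_cons, List.sum_cons]
    omega

end MvPolynomial

section

variable {A : ℕ}

theorem vand_eq_det_vandermonde : vand A = (Matrix.vandermonde fun i : Fin A => -X i).det := by
  rw [Matrix.det_vandermonde, vand, Finset.prod_filter, Fintype.prod_prod_type]
  refine Finset.prod_congr rfl fun i _ => ?_
  rw [← Finset.prod_filter]
  exact Finset.prod_congr (by ext; simp) fun _ _ => by ring

theorem rename_vand (σ : Equiv.Perm (Fin A)) :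
    rename σ (vand A) = (Equiv.Perm.sign σ : ℤ) * vand A := by
  rw [vand_eq_det_vandermonde, AlgHom.map_det, ← Matrix.det_permute]
  congr 1
  ext i j
  simp [Matrix.vandermonde]

theorem totalDegree_vand_le : (vand A).totalDegree ≤ A.choose 2 := by
  refine (totalDegree_finsetProd _ _).trans ?_
  refine (Finset.sum_le_card_nsmul _ _ 1 fun p _ => ?_).trans ?_
  · exact (totalDegree_sub _ _).trans (by simp)
  · simp [Fintype.card_product_filter_lt]

noncomputable def dR (R : ℕ) (P : MvPolynomial (Fin A) ℂ) : MvPolynomial (Fin A) ℂ :=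
  ∑ S ∈ Finset.powersetCard R Finset.univ, pdPow (fun μ => if μ ∈ S then 1 else 0) P

theorem dR_neg (R : ℕ) (P : MvPolynomial (Fin A) ℂ) : dR R (-P) = -dR R P := by
  have h (n : Fin A → ℕ) : pdPow n (-P) = -pdPow n P := by
    have := apply_iterPDerivs_of_semiconj (g := Neg.neg) (f := id)
      (fun μ q => (map_neg (pderiv μ) q).symm) n (List.finRange A) P
    rw [List.map_id, Function.comp_id] at this
    exact this.symm
  simp only [dR, h, Finset.sum_neg_distrib]

theorem rename_dR (σ : Equiv.Perm (Fin A)) (R : ℕ) (P : MvPolynomial (Fin A) ℂ) :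
    rename σ (dR R P) = dR R (rename σ P) := by
  have h (S : Finset (Fin A)) : rename σ (pdPow (fun μ => if μ ∈ S then 1 else 0) P) =
      pdPow (fun μ => if μ ∈ S.map σ.toEmbedding then 1 else 0) (rename σ P) := by
    have hperm : ((List.finRange A).map σ).Perm (List.finRange A) :=
      (List.perm_ext_iff_of_nodup ((List.nodup_finRange A).map σ.injective)
        (List.nodup_finRange A)).mpr fun ν => by simpa using σ.surjective ν
    have hn : (fun μ => if μ ∈ S.map σ.toEmbedding then 1 else 0) ∘ σ =
        fun μ => if μ ∈ S then 1 else 0 := by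
      ext; simp
    have := apply_iterPDerivs_of_semiconj (g := rename σ) (f := σ)
      (fun μ q => (pderiv_rename σ.injective μ q).symm)
      (fun μ => if μ ∈ S.map σ.toEmbedding then 1 else 0) (List.finRange A) P
    rwa [hn, iterPDerivs_perm _ hperm] at this
  rw [dR, map_sum, Finset.sum_congr rfl fun S _ => h S]
  conv_rhs => rw [dR, ← Finset.map_univ_equiv σ, Finset.powersetCard_map, Finset.sum_map]
  rfl

theorem degree_add_le_totalDegree_of_mem_support_dR {R : ℕ} {P : MvPolynomial (Fin A) ℂ}
    {m : Fin A →₀ ℕ} (hm : m ∈ (dR R P).support) : m.degree + R ≤ P.totalDegree := by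
  classical
  obtain ⟨S, hS, hmS⟩ := Finset.mem_biUnion.mp (support_sum hm)
  have := degree_add_sum_le_totalDegree_of_mem_support_iterPDerivs hmS
  rwa [← Fin.sum_univ_def, Finset.sum_boole, Finset.filter_mem_eq_inter, Finset.univ_inter,
    (Finset.mem_powersetCard.mp hS).2] at this

end

theorem dR_vand_eq_zero_general (A R : ℕ) (h1 : 1 ≤ R) :
    ∑ S ∈ Finset.powersetCard R (Finset.univ : Finset (Fin A)),
      pdPow (fun μ => if μ ∈ S then 1 else 0) (vand A) = 0 := by
  change dR R (vand A) = 0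
  have halt (i j : Fin A) (hij : i ≠ j) :
      rename (Equiv.swap i j) (dR R (vand A)) = -dR R (vand A) := by
    rw [rename_dR, rename_vand, Equiv.Perm.sign_swap hij]
    simpa using dR_neg R (vand A)
  ext m
  by_contra hm
  have hinj : Function.Injective m := fun i j hij =>
    by_contra fun hne => hm (coeff_eq_zero_of_rename_swap_eq_neg (halt i j hne) hij)
  have hdeg := degree_add_le_totalDegree_of_mem_support_dR (mem_support_iff.mpr hm)
  have hlow := choose_two_le_degree_of_injective hinj
  have hup := totalDegree_vand_le (A := A)
  simp only [Fintype.card_fin] at hlow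
  omega

/-- For every `R` with `1 ≤ R ≤ A`, the operator
`d_R = ∑_{S ⊆ {1,...,A}, |S| = R} ∏_{μ∈S} ∂_μ` annihilates the Vandermonde polynomial. -/
theorem dR_vand_eq_zero (A R : ℕ) (h1 : 1 ≤ R) (h2 : R ≤ A) :
    ∑ S ∈ Finset.powersetCard R (Finset.univ : Finset (Fin A)),
      pdPow (fun μ => if μ ∈ S then 1 else 0) (vand A) = 0 :=
  dR_vand_eq_zero_general A R h1
end

section
/- The polynomials {∏_{μ=1}^{A} ∂_μ^{n_μ} 𝒥 : n ∈ ℕ^A with n_μ < μ for all μ} are linearly independent over ℂ, where 𝒥 = ∏_{1≤μ<ν≤A}(z_μ − z_ν). -/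
open MvPolynomial

namespace PdPowVandAux

open Finset

variable {A : ℕ}

/-- An exponent vector as a finitely supported function. -/
noncomputable def expo (f : Fin A → ℕ) : Fin A →₀ ℕ := Finsupp.equivFunOnFinite.symm f

@[simp] lemma expo_apply (f : Fin A → ℕ) (μ : Fin A) : expo f μ = f μ := rfl

lemma coeff_pderiv' (i : Fin A) (f : MvPolynomial (Fin A) ℂ) (d : Fin A →₀ ℕ) :
    coeff d (pderiv i f) = ((d i + 1 : ℕ) : ℂ) * coeff (d + Finsupp.single i 1) f := by
  induction f using MvPolynomial.induction_on' with
  | monomial s a =>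
    rw [pderiv_monomial, coeff_monomial, coeff_monomial]
    by_cases hs : s = d + Finsupp.single i 1
    · have h1 : s - Finsupp.single i 1 = d := by
        subst hs; ext j; simp [Finsupp.single_apply]
      have h2 : s i = d i + 1 := by subst hs; simp
      rw [if_pos h1, if_pos hs, h2]
      push_cast; ring
    · rw [if_neg hs]
      by_cases hsi : s i = 0
      · by_cases h1 : s - Finsupp.single i 1 = d
        · rw [if_pos h1, hsi]; simp
        · rw [if_neg h1, mul_zero]
      · have h1 : s - Finsupp.single i 1 ≠ d := by
          intro h; apply hs; ext j
          have := DFunLike.congr_fun h j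
          simp [Finsupp.single_apply] at this ⊢
          by_cases hj : j = i
          · subst hj; simp at this ⊢; omega
          · simp [hj, Ne.symm hj] at this ⊢; omega
        rw [if_neg h1, mul_zero]
  | add p q hp hq => simp [map_add, coeff_add, hp, hq]; ring

lemma coeff_pderiv_iterate (i : Fin A) (k : ℕ) (f : MvPolynomial (Fin A) ℂ) (d : Fin A →₀ ℕ) :
    coeff d ((fun Q => pderiv i Q)^[k] f) =
      (∏ j ∈ Finset.range k, ((d i + j + 1 : ℕ) : ℂ)) * coeff (d + Finsupp.single i k) f := by
  induction k generalizing f with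
  | zero => simp
  | succ k ih =>
    rw [Function.iterate_succ_apply, ih (pderiv i f), coeff_pderiv', prod_range_succ]
    have h1 : (d + Finsupp.single i k) i + 1 = d i + k + 1 := by simp
    have h2 : d + Finsupp.single i k + Finsupp.single i 1 = d + Finsupp.single i (k + 1) := by
      rw [add_assoc, ← Finsupp.single_add]
    rw [h1, h2]; ring

lemma coeff_foldr (n : Fin A → ℕ) (f : MvPolynomial (Fin A) ℂ) :
    ∀ (l : List (Fin A)) (d : Fin A →₀ ℕ), ∃ c : ℂ, c ≠ 0 ∧
      coeff d (l.foldr (fun μ Q => (fun Q' => pderiv μ Q')^[n μ] Q) f) =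
        c * coeff (d + (l.map (fun μ => Finsupp.single μ (n μ))).sum) f := by
  intro l
  induction l with
  | nil => intro d; exact ⟨1, one_ne_zero, by simp⟩
  | cons a l ih =>
    intro d
    obtain ⟨c, hc, hcoeff⟩ := ih (d + Finsupp.single a (n a))
    refine ⟨(∏ j ∈ Finset.range (n a), ((d a + j + 1 : ℕ) : ℂ)) * c, ?_, ?_⟩
    · refine mul_ne_zero (Finset.prod_ne_zero_iff.2 fun j _ => ?_) hc
      exact Nat.cast_ne_zero.2 (by omega)
    · rw [List.foldr_cons, coeff_pderiv_iterate, hcoeff, List.map_cons, List.sum_cons,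
        mul_assoc, ← add_assoc]

lemma coeff_pdPow (n : Fin A → ℕ) (f : MvPolynomial (Fin A) ℂ) (d : Fin A → ℕ) :
    ∃ c : ℂ, c ≠ 0 ∧
      coeff (expo d) (pdPow n f) = c * coeff (expo (fun μ => d μ + n μ)) f := by
  obtain ⟨c, hc, h⟩ := coeff_foldr n f (List.finRange A) (expo d)
  refine ⟨c, hc, ?_⟩
  rw [pdPow, h]
  have hsum : ((List.finRange A).map (fun μ => Finsupp.single μ (n μ))).sum =
      ∑ μ : Fin A, Finsupp.single μ (n μ) := by
    rw [Finset.sum_eq_multiset_sum]; rfl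
  have hexp : expo d + ((List.finRange A).map (fun μ => Finsupp.single μ (n μ))).sum =
      expo (fun μ => d μ + n μ) := by
    rw [hsum]
    ext j
    rw [Finsupp.add_apply, Finsupp.finset_sum_apply]
    simp [Finsupp.single_apply]
  rw [hexp]

lemma expo_injective : Function.Injective (expo (A := A)) :=
  Finsupp.equivFunOnFinite.symm.injective

lemma prod_X_pow (g : Fin A → ℕ) :
    ∏ j, (X j : MvPolynomial (Fin A) ℂ) ^ g j = monomial (expo g) 1 := by
  rw [← prod_X_pow_eq_monomial]
  refine (Finset.prod_subset (Finset.subset_univ _) ?_).symm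
  intro x _ hx
  have : expo g x = 0 := Finsupp.notMem_support_iff.mp hx
  simp only [expo_apply] at this
  simp [this]

lemma prod_perm_X (σ : Equiv.Perm (Fin A)) :
    ∏ i, (X (σ i) : MvPolynomial (Fin A) ℂ) ^ (i : ℕ) =
      monomial (expo fun j => ((σ⁻¹ j : Fin A) : ℕ)) 1 := by
  rw [← prod_X_pow]
  rw [← Equiv.prod_comp σ (fun j => (X j : MvPolynomial (Fin A) ℂ) ^ ((σ⁻¹ j : Fin A) : ℕ))]
  simp

lemma vand_eq_det :
    vand A = (-1) ^ (Finset.univ.filter (fun p : Fin A × Fin A => p.1 < p.2)).card *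
      (Matrix.vandermonde (fun i => (X i : MvPolynomial (Fin A) ℂ))).det := by
  rw [Matrix.det_vandermonde]
  rw [← Finset.prod_sigma (Finset.univ : Finset (Fin A)) (fun i => Finset.Ioi i)
    (fun x => (X x.2 : MvPolynomial (Fin A) ℂ) - X x.1)]
  rw [show (Finset.univ : Finset (Fin A)).sigma (fun i => Finset.Ioi i) =
    (Finset.univ.filter (fun p : Fin A × Fin A => p.1 < p.2)).map
      ⟨fun p => ⟨p.1, p.2⟩, fun p q h => by cases p; cases q; simpa using h⟩ from ?_]
  · rw [Finset.prod_map]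
    rw [vand]
    rw [← Finset.prod_const, ← Finset.prod_mul_distrib]
    refine Finset.prod_congr rfl fun p _ => ?_
    change _ = -1 * (X p.2 - X p.1)
    ring
  · ext ⟨i, j⟩
    simp [Finset.mem_sigma, Finset.mem_map, Finset.mem_filter]
    change i < j ↔ ∃ a b, a < b ∧ (⟨a, b⟩ : Σ _ : Fin A, Fin A) = ⟨i, j⟩
    simp

lemma coeff_vand_eq (d : Fin A →₀ ℕ) :
    coeff d (vand A) = (-1) ^ (Finset.univ.filter (fun p : Fin A × Fin A => p.1 < p.2)).card *
      ∑ σ : Equiv.Perm (Fin A), (Equiv.Perm.sign σ : ℂ) *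
        (if expo (fun j => ((σ⁻¹ j : Fin A) : ℕ)) = d then 1 else 0) := by
  rw [vand_eq_det, Matrix.det_apply,
    show ((-1 : MvPolynomial (Fin A) ℂ)) ^ (Finset.univ.filter
      (fun p : Fin A × Fin A => p.1 < p.2)).card = C ((-1 : ℂ) ^ (Finset.univ.filter
      (fun p : Fin A × Fin A => p.1 < p.2)).card) by rw [map_pow, map_neg, map_one]]
  rw [coeff_C_mul, coeff_sum]
  congr 1
  refine Finset.sum_congr rfl fun σ _ => ?_
  simp only [Matrix.vandermonde_apply, prod_perm_X, Units.smul_def, zsmul_eq_mul]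
  rw [show ((Equiv.Perm.sign σ : ℤ) : MvPolynomial (Fin A) ℂ) =
    C ((Equiv.Perm.sign σ : ℤ) : ℂ) from by simp, coeff_C_mul, coeff_monomial]

lemma coeff_vand_perm {d : Fin A →₀ ℕ} (h : coeff d (vand A) ≠ 0) :
    ∃ σ : Equiv.Perm (Fin A), ∀ μ, d μ = (σ μ : ℕ) := by
  rw [coeff_vand_eq] at h
  have h2 : ∑ σ : Equiv.Perm (Fin A), (Equiv.Perm.sign σ : ℂ) *
      (if expo (fun j => ((σ⁻¹ j : Fin A) : ℕ)) = d then 1 else 0) ≠ 0 := by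
    intro h0; rw [h0, mul_zero] at h; exact h rfl
  obtain ⟨σ, -, hσ⟩ := Finset.exists_ne_zero_of_sum_ne_zero h2
  refine ⟨σ⁻¹, fun μ => ?_⟩
  by_cases hc : expo (fun j => ((σ⁻¹ j : Fin A) : ℕ)) = d
  · exact (DFunLike.congr_fun hc μ).symm
  · rw [if_neg hc, mul_zero] at hσ; exact absurd rfl hσ

lemma coeff_vand_diag : coeff (expo fun μ => (μ : ℕ)) (vand A) ≠ 0 := by
  rw [coeff_vand_eq]
  refine mul_ne_zero (pow_ne_zero _ (by norm_num)) ?_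
  rw [Finset.sum_eq_single (1 : Equiv.Perm (Fin A))]
  · simp
  · intro σ _ hσ
    rw [if_neg, mul_zero]
    intro hc
    apply hσ
    have : σ⁻¹ = 1 := by
      ext j
      exact_mod_cast (DFunLike.congr_fun hc j)
    rw [← inv_inv σ, this, inv_one]
  · intro h; exact absurd (Finset.mem_univ _) h

/-- The weight `∑ μ · n μ` of an exponent vector. -/
def W (n : Fin A → ℕ) : ℕ := ∑ μ : Fin A, (μ : ℕ) * n μ

lemma weight_lt {n n' : Fin A → ℕ} (hn : ∀ μ, n μ ≤ (μ : ℕ)) (σ : Equiv.Perm (Fin A))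
    (h : ∀ μ : Fin A, (μ : ℕ) - n μ + n' μ = (σ μ : ℕ)) : n' = n ∨ W n' < W n := by
  by_cases hne : n' = n
  · exact Or.inl hne
  right
  set d : Fin A → ℤ := fun μ => (n' μ : ℤ) - n μ with hd
  have hσ : ∀ μ, ((σ μ : ℕ) : ℤ) = (μ : ℕ) + d μ := by
    intro μ
    rw [← h μ]
    have := hn μ
    push_cast [Nat.cast_sub this]
    ring
  have hsq : ∑ μ, ((σ μ : ℕ) : ℤ) ^ 2 = ∑ μ : Fin A, ((μ : ℕ) : ℤ) ^ 2 :=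
    Equiv.sum_comp σ (fun j => ((j : ℕ) : ℤ) ^ 2)
  have e1 : ∑ μ : Fin A, (((μ : ℕ) : ℤ) ^ 2 + (2 * (μ : ℕ) * d μ + d μ ^ 2)) =
      ∑ μ : Fin A, ((μ : ℕ) : ℤ) ^ 2 := by
    rw [← hsq]
    refine Finset.sum_congr rfl fun μ _ => ?_
    rw [hσ μ]; ring
  rw [Finset.sum_add_distrib] at e1
  have e2 : ∑ μ : Fin A, (2 * ((μ : ℕ) : ℤ) * d μ + d μ ^ 2) = 0 := by linarith
  rw [Finset.sum_add_distrib] at e2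
  have e3 : ∑ μ : Fin A, 2 * ((μ : ℕ) : ℤ) * d μ = 2 * ∑ μ : Fin A, ((μ : ℕ) : ℤ) * d μ := by
    rw [Finset.mul_sum]
    exact Finset.sum_congr rfl fun μ _ => by ring
  have hμ0 : ∃ μ, d μ ≠ 0 := by
    by_contra hall
    push_neg at hall
    apply hne
    funext μ
    have := hall μ
    simp only [hd, sub_eq_zero] at this
    exact_mod_cast this
  obtain ⟨μ0, hμ0⟩ := hμ0
  have hpos : 0 < ∑ μ : Fin A, d μ ^ 2 := by
    refine Finset.sum_pos' (fun μ _ => sq_nonneg _) ⟨μ0, Finset.mem_univ _, ?_⟩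
    exact lt_of_le_of_ne (sq_nonneg _) (Ne.symm (pow_ne_zero 2 hμ0))
  have key : ∑ μ : Fin A, ((μ : ℕ) : ℤ) * d μ < 0 := by linarith
  have hW : (W n' : ℤ) - (W n : ℤ) = ∑ μ : Fin A, ((μ : ℕ) : ℤ) * d μ := by
    simp only [W, hd]
    push_cast
    rw [← Finset.sum_sub_distrib]
    exact Finset.sum_congr rfl fun μ _ => by ring
  have : (W n' : ℤ) < (W n : ℤ) := by linarith
  exact_mod_cast this

end PdPowVandAux

open PdPowVandAux in
/-- The polynomials `∏_μ ∂_μ^{n_μ} 𝒥`, indexed by vectors `n` with `n_μ ≤ μ − 1`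
(0-based: `n μ ≤ μ`) for all `μ`, are linearly independent over `ℂ`. -/
theorem pdPow_vand_linearIndependent (A : ℕ) :
    LinearIndependent ℂ
      (fun n : {n : Fin A → ℕ // ∀ μ, n μ ≤ (μ : ℕ)} => pdPow n.1 (vand A)) := by
  rw [linearIndependent_iff]
  intro l hl
  by_contra hl0
  have hsupp : l.support.Nonempty := Finsupp.support_nonempty_iff.mpr hl0
  obtain ⟨n₀, hn₀mem, hmin⟩ := Finset.exists_min_image l.support (fun n => W n.1) hsupp
  set E : Fin A → ℕ := fun μ => (μ : ℕ) - n₀.1 μ with hE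
  have hcoeff : ∑ n' ∈ l.support, l n' * coeff (expo E) (pdPow n'.1 (vand A)) = 0 := by
    have h := congrArg (coeff (expo E)) hl
    rw [Finsupp.linearCombination_apply, Finsupp.sum, coeff_sum, coeff_zero] at h
    simpa only [coeff_smul, smul_eq_mul] using h
  have hzero : ∀ n' ∈ l.support, n' ≠ n₀ →
      coeff (expo E) (pdPow n'.1 (vand A)) = 0 := by
    intro n' hmem hne
    by_contra hnz
    obtain ⟨c, hc, heq⟩ := coeff_pdPow n'.1 (vand A) E
    rw [heq] at hnz
    have hv : coeff (expo fun μ => E μ + n'.1 μ) (vand A) ≠ 0 := by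
      intro h0; rw [h0, mul_zero] at hnz; exact hnz rfl
    obtain ⟨σ, hσ⟩ := coeff_vand_perm hv
    rcases weight_lt n₀.2 σ (fun μ => hσ μ) with h1 | h1
    · exact hne (Subtype.ext h1)
    · have := hmin n' hmem
      omega
  rw [Finset.sum_eq_single n₀ (fun b hb hbne => by rw [hzero b hb hbne, mul_zero])
    (fun h => absurd hn₀mem h)] at hcoeff
  have hdiag : coeff (expo E) (pdPow n₀.1 (vand A)) ≠ 0 := by
    obtain ⟨c, hc, heq⟩ := coeff_pdPow n₀.1 (vand A) E
    rw [heq]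
    have h2 : (fun μ => E μ + n₀.1 μ) = fun μ : Fin A => (μ : ℕ) := by
      funext μ
      have := n₀.2 μ
      simp only [hE]
      omega
    rw [h2]
    exact mul_ne_zero hc coeff_vand_diag
  rcases mul_eq_zero.mp hcoeff with h | h
  · exact (Finsupp.mem_support_iff.mp hn₀mem) h
  · exact hdiag h
end

section
/- For nonnegative integers N_1 and N_2, the number of partitions of L into at most N_2 parts each of size at most N_1 (equivalently, Young diagrams with at most N_2 columns of height at most N_1 containing exactly L cells) equals the coefficient of q^L in the Gaussian binomial coefficient [N_1+N_2 choose N_1]_q. -/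
/-- The q-analog `[n]_q = 1 + q + ⋯ + q^{n−1}` as a polynomial in `ℤ[q]`. -/
noncomputable def qInt (n : ℕ) : Polynomial ℤ := ∑ i ∈ Finset.range n, Polynomial.X ^ i

/-- The q-factorial `[n]_q! = [n]_q [n−1]_q ⋯ [1]_q`. -/
noncomputable def qFact (n : ℕ) : Polynomial ℤ := ∏ j ∈ Finset.range n, qInt (j + 1)

/-!
The generating polynomial `G a b = ∑ q^|p|` (`boxGenFun`) of partitions `p` in an `a × b` box
satisfies the q-Pascal recurrence `G (a+1) (b+1) = G a (b+1) + q^(a+1) G (a+1) b`: either the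
largest part is at most `a`, or it equals `a + 1` and the remaining `b` parts form a partition in
an `(a+1) × b` box. Since `[a+b+2]_q = [a+1]_q + q^(a+1) [b+1]_q`, the product
`[a]_q! [b]_q! G a b` obeys the same recursion as `[a+b]_q!`, and `B = G N₁ N₂` follows by
cancelling the monic factor `[N₁]_q! [N₂]_q!`.
-/

open Polynomial Finset

lemma Fin.antitone_cons_iff {α : Type*} [Preorder α] {n : ℕ} {a : α} {f : Fin n → α} :
    Antitone (Fin.cons a f : Fin (n + 1) → α) ↔ (∀ i, f i ≤ a) ∧ Antitone f := by
  simp only [antitone_iff_forall_lt]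
  exact Fin.liftFun_cons (· ≥ ·)

lemma Polynomial.coeff_sum_X_pow {R ι : Type*} [Semiring R] (s : Finset ι) (f : ι → ℕ) (n : ℕ) :
    (∑ i ∈ s, (X : R[X]) ^ f i).coeff n = #{i ∈ s | f i = n} := by
  simp [coeff_X_pow, sum_boole, eq_comm]

lemma qInt_add (m n : ℕ) : qInt (m + n) = qInt m + X ^ m * qInt n := by
  simp only [qInt, sum_range_add, mul_sum, pow_add]

lemma qFact_succ (n : ℕ) : qFact (n + 1) = qFact n * qInt (n + 1) :=
  prod_range_succ _ _

lemma qFact_monic (n : ℕ) : (qFact n).Monic :=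
  monic_prod_of_monic _ _ fun j _ => monic_geom_sum_X j.succ_ne_zero

open scoped Classical in
def boxPartitions (a b : ℕ) : Finset (Fin b → ℕ) :=
  {p ∈ Fintype.piFinset fun _ => range (a + 1) | Antitone p}

lemma mem_boxPartitions {a b : ℕ} {p : Fin b → ℕ} :
    p ∈ boxPartitions a b ↔ (∀ i, p i ≤ a) ∧ Antitone p := by
  simp [boxPartitions]

noncomputable def boxGenFun (a b : ℕ) : ℤ[X] :=
  ∑ p ∈ boxPartitions a b, X ^ ∑ i, p i

lemma boxGenFun_zero_left (b : ℕ) : boxGenFun 0 b = 1 := by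
  have : boxPartitions 0 b = {0} := by
    ext p
    simp only [mem_boxPartitions, nonpos_iff_eq_zero, mem_singleton]
    exact ⟨fun h => funext h.1, by rintro rfl; exact ⟨fun _ => rfl, antitone_const⟩⟩
  simp [boxGenFun, this]

lemma boxGenFun_zero_right (a : ℕ) : boxGenFun a 0 = 1 := by
  have : boxPartitions a 0 = {0} := by
    ext p
    simp [mem_boxPartitions, Subsingleton.elim p 0, Subsingleton.antitone]
  simp [boxGenFun, this]

lemma boxPartitions_filter_head_le (a b : ℕ) :
    {p ∈ boxPartitions (a + 1) (b + 1) | p 0 ≤ a} = boxPartitions a (b + 1) := by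
  ext p
  simp only [mem_filter, mem_boxPartitions]
  constructor
  · rintro ⟨⟨-, hp⟩, h0⟩
    exact ⟨fun i => (hp (Fin.zero_le i)).trans h0, hp⟩
  · rintro ⟨h, hp⟩
    exact ⟨⟨fun i => (h i).trans a.le_succ, hp⟩, h 0⟩

lemma sum_boxPartitions_filter_head_gt (a b : ℕ) :
    ∑ p ∈ boxPartitions (a + 1) (b + 1) with ¬p 0 ≤ a, X ^ ∑ i, p i
      = X ^ (a + 1) * boxGenFun (a + 1) b := by
  rw [boxGenFun, mul_sum]
  have head_eq {p : Fin (b + 1) → ℕ} (hp : p ∈ {p ∈ boxPartitions (a + 1) (b + 1) | ¬p 0 ≤ a}) :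
      p 0 = a + 1 := by
    simp only [mem_filter, mem_boxPartitions] at hp
    have := hp.1.1 0
    omega
  apply sum_nbij' Fin.tail (Fin.cons (a + 1))
  · intro p hp
    obtain ⟨hle, hp⟩ := mem_boxPartitions.1 (mem_filter.1 hp).1
    exact mem_boxPartitions.2 ⟨fun i => hle i.succ, hp.comp_monotone Fin.strictMono_succ.monotone⟩
  · intro q hq
    simp_all [mem_boxPartitions, Fin.forall_fin_succ, Fin.antitone_cons_iff]
  · intro p hp
    rw [← head_eq hp, Fin.cons_self_tail]
  · intro q _
    exact Fin.tail_cons _ _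
  · intro p hp
    rw [Fin.sum_univ_succ, head_eq hp, pow_add]
    rfl

lemma boxGenFun_succ_succ (a b : ℕ) :
    boxGenFun (a + 1) (b + 1) = boxGenFun a (b + 1) + X ^ (a + 1) * boxGenFun (a + 1) b := by
  rw [boxGenFun, ← sum_filter_add_sum_filter_not _ (fun p => p 0 ≤ a),
    boxPartitions_filter_head_le, sum_boxPartitions_filter_head_gt]
  rfl

lemma qFact_mul_qFact_mul_boxGenFun (a b : ℕ) :
    qFact a * qFact b * boxGenFun a b = qFact (a + b) := by
  induction a generalizing b with
  | zero => simp [qFact, boxGenFun_zero_left]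
  | succ a iha =>
    induction b with
    | zero => simp [qFact, boxGenFun_zero_right]
    | succ b ihb =>
      calc qFact (a + 1) * qFact (b + 1) * boxGenFun (a + 1) (b + 1)
          = qInt (a + 1) * (qFact a * qFact (b + 1) * boxGenFun a (b + 1))
            + X ^ (a + 1) * qInt (b + 1) * (qFact (a + 1) * qFact b * boxGenFun (a + 1) b) := by
            rw [boxGenFun_succ_succ, qFact_succ a, qFact_succ b]
            ring
        _ = qFact (a + b + 1) * (qInt (a + 1) + X ^ (a + 1) * qInt (b + 1)) := by
            rw [iha, ihb, ← add_assoc, add_right_comm a 1 b]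
            ring
        _ = qFact (a + 1 + (b + 1)) := by
            rw [← qInt_add, show a + 1 + (b + 1) = a + b + 1 + 1 by omega, qFact_succ (a + b + 1)]

/-- The number of partitions of `L` fitting in an `N₁ × N₂` box (at most `N₂` parts,
each of size at most `N₁`) equals the coefficient of `q^L` in the Gaussian binomial
coefficient `[N₁+N₂ choose N₁]_q`, i.e. in the polynomial `B` characterized by
`[N₁]_q! [N₂]_q! B = [N₁+N₂]_q!`. -/
theorem card_partitions_in_box_eq_gaussianBinomial_coeff (N₁ N₂ L : ℕ)
    (B : Polynomial ℤ) (hB : qFact N₁ * qFact N₂ * B = qFact (N₁ + N₂)) :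
    B.coeff L = Nat.card {p : Fin N₂ → ℕ //
      (∀ i, p i ≤ N₁) ∧ (∀ i j, i ≤ j → p j ≤ p i) ∧ ∑ i, p i = L} := by
  have hB_eq : B = boxGenFun N₁ N₂ := by
    refine mul_left_cancel₀ ((qFact_monic N₁).mul (qFact_monic N₂)).ne_zero ?_
    rw [hB, qFact_mul_qFact_mul_boxGenFun]
  rw [hB_eq, boxGenFun, coeff_sum_X_pow, ← Nat.card_eq_finsetCard]
  congr 1
  exact Nat.card_congr <| Equiv.subtypeEquivRight fun p => by
    simp only [mem_filter, mem_boxPartitions, and_assoc]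
    rfl
end

section
/- The coefficient of the monomial ∏_{μ=1}^A z_μ^{μ−1−n_μ} in the simple polynomial P(n), for n satisfying n_μ ≤ μ−1 for all μ and n strictly increasing within each species block, is nonzero (equal, up to sign, to ∏_μ (μ−1)!/(μ−1−n_μ)! and possibly a combinatorial multiplicity, but in any case nonzero). -/
open MvPolynomial

open scoped Classical

/-- The index (0-based) at which the block of species `α` starts: `N_1 + ⋯ + N_{α-1}`. -/
def blockStart {M : ℕ} (N : Fin M → ℕ) (α : Fin M) : ℕ :=
  ∑ β ∈ Finset.univ.filter (fun β => β < α), N β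

/-- Particle `μ` belongs to the block of species `α`. -/
def inBlock {M : ℕ} (N : Fin M → ℕ) (α : Fin M) {A : ℕ} (μ : Fin A) : Prop :=
  blockStart N α ≤ (μ : ℕ) ∧ (μ : ℕ) < blockStart N α + N α

/-- Particles `μ` and `ν` belong to the same species block. -/
def sameBlock {M : ℕ} (N : Fin M → ℕ) {A : ℕ} (μ ν : Fin A) : Prop :=
  ∃ α, inBlock N α μ ∧ inBlock N α ν

/-- The simple polynomial `P(n) = ∑_{σ ∈ S_{N_1} × ⋯ × S_{N_M}} sgn(σ) ∏_μ ∂_μ^{n_{σ(μ)}} 𝒥`,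
the sum running over permutations preserving each species block. -/
noncomputable def simpleP {M A : ℕ} (N : Fin M → ℕ) (n : Fin A → ℕ) :
    MvPolynomial (Fin A) ℂ :=
  ∑ σ ∈ Finset.univ.filter (fun σ : Equiv.Perm (Fin A) => ∀ μ, sameBlock N μ (σ μ)),
    (Equiv.Perm.sign σ : ℤ) • pdPow (n ∘ σ) (vand A)

/-!
Expand the Vandermonde as `± ∑_τ sgn τ ∏_μ z_μ ^ τ(μ)`. Since `∂^k z^e = e!/(e-k)! z^(e-k)`, the
pair `(σ, τ)` contributes to the monomial `∏_μ z_μ ^ (μ - n_μ)` only if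
`τ(μ) = μ - n_μ + n_{σ(μ)}` for all `μ`, i.e. `τ(μ) - σ(μ) = g(μ) - g(σ(μ))` with `g(μ) = μ - n_μ`.
Strict increase of `n` within a block makes `g` antitone there, so by the rearrangement inequality
`∑_μ σ(μ) (g(μ) - g(σ(μ))) ≥ 0`; expanding `∑ τ(μ)² = ∑ σ(μ)²` then gives
`∑ (g(μ) - g(σ(μ)))² ≤ 0`, whence `τ = σ`. The coefficient is therefore
`± ∏_μ μ!/(μ - n_μ)!` times the number of block permutations preserving `g`, which is positive
because the identity is one of them.
-/

theorem AntivaryOn.sum_mul_le_sum_comp_perm_mul_of_mem_iff {ι α : Type*} [Semiring α]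
    [LinearOrder α] [IsStrictOrderedRing α] [ExistsAddOfLE α] {s : Finset ι} {f g : ι → α}
    (hfg : AntivaryOn f g s) {σ : Equiv.Perm ι} (hσ : ∀ x, σ x ∈ s ↔ x ∈ s) :
    ∑ i ∈ s, f i * g i ≤ ∑ i ∈ s, f (σ i) * g i := by
  set ρ := Equiv.Perm.ofSubtype (σ.subtypePerm hσ)
  calc ∑ i ∈ s, f i * g i ≤ ∑ i ∈ s, f (ρ i) * g i :=
        hfg.sum_mul_le_sum_comp_perm_mul fun x hx =>
          by_contra fun hxs => hx (Equiv.Perm.ofSubtype_apply_of_not_mem _ hxs)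
    _ = ∑ i ∈ s, f (σ i) * g i :=
        Finset.sum_congr rfl fun i hi => by rw [Equiv.Perm.ofSubtype_apply_of_mem _ hi]; rfl

lemma Finset.prod_filter_fst_lt_snd {ι β : Type*} [Fintype ι] [LinearOrder ι]
    [LocallyFiniteOrderTop ι] [CommMonoid β] (f : ι → ι → β) :
    ∏ p ∈ Finset.univ.filter (fun p : ι × ι => p.1 < p.2), f p.1 p.2 =
      ∏ i, ∏ j ∈ Finset.Ioi i, f i j := by
  rw [Finset.prod_filter, Fintype.prod_prod_type]
  refine Finset.prod_congr rfl fun i _ => ?_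
  rw [← Finset.filter_lt_eq_Ioi, Finset.prod_filter]

lemma vand_eq_sum_monomial (A : ℕ) :
    vand A = ∑ τ : Equiv.Perm (Fin A),
      monomial (Finsupp.equivFunOnFinite.symm fun i => (τ i : ℕ))
        ((-1) ^ (Finset.univ.filter fun p : Fin A × Fin A => p.1 < p.2).card *
          (Equiv.Perm.sign τ : ℂ)) := by
  have hdet : (Matrix.vandermonde fun i : Fin A => (X i : MvPolynomial (Fin A) ℂ)).det =
      ∑ τ : Equiv.Perm (Fin A),
        monomial (Finsupp.equivFunOnFinite.symm fun i => (τ i : ℕ)) (Equiv.Perm.sign τ : ℂ) := by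
    rw [← Matrix.det_transpose, Matrix.det_apply]
    refine Finset.sum_congr rfl fun τ _ => ?_
    rw [monomial_eq, Finsupp.prod_fintype _ _ fun _ => pow_zero _]
    simp [Matrix.vandermonde_apply, Units.smul_def]
  have hneg : vand A = (-1) ^ (Finset.univ.filter fun p : Fin A × Fin A => p.1 < p.2).card *
      ∏ p ∈ Finset.univ.filter (fun p : Fin A × Fin A => p.1 < p.2), (X p.2 - X p.1) := by
    simp_rw [vand, ← Finset.prod_neg, neg_sub]
  rw [hneg, Finset.prod_filter_fst_lt_snd fun i j => (X j - X i : MvPolynomial (Fin A) ℂ),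
    ← Matrix.det_vandermonde, hdet, Finset.mul_sum]
  refine Finset.sum_congr rfl fun τ _ => ?_
  rw [← C_mul_monomial, map_pow, map_neg, map_one]

section Derivatives

variable {A : ℕ}

lemma pdPow_eq_foldr_mul_apply (k : Fin A → ℕ) (P : MvPolynomial (Fin A) ℂ) :
    pdPow k P = (List.finRange A).foldr
      (fun μ L => (pderiv μ).toLinearMap ^ k μ * L) (1 : Module.End ℂ _) P := by
  unfold pdPow
  induction List.finRange A with
  | nil => rfl
  | cons μ t ih => rw [List.foldr_cons, List.foldr_cons, ih, Module.End.mul_apply,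
      Module.End.pow_apply]; rfl

lemma pdPow_sum {ι : Type*} (k : Fin A → ℕ) (s : Finset ι) (f : ι → MvPolynomial (Fin A) ℂ) :
    pdPow k (∑ i ∈ s, f i) = ∑ i ∈ s, pdPow k (f i) := by
  simp only [pdPow_eq_foldr_mul_apply, map_sum]

lemma iterate_pderiv_monomial (μ : Fin A) (k : ℕ) (e : Fin A →₀ ℕ) (c : ℂ) :
    (fun Q => pderiv μ Q)^[k] (monomial e c) =
      monomial (e - Finsupp.single μ k) (c * (e μ).descFactorial k) := by
  induction k with
  | zero => simp
  | succ k ih =>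
    rw [Function.iterate_succ_apply', ih, pderiv_monomial, tsub_tsub, ← Finsupp.single_add,
      Finsupp.tsub_apply, Finsupp.single_eq_same, Nat.descFactorial_succ, Nat.cast_mul,
      mul_assoc, mul_comm (((e μ).descFactorial k : ℕ) : ℂ)]

lemma foldr_iterate_pderiv_monomial (k : Fin A → ℕ) {l : List (Fin A)} (hl : l.Nodup)
    (e : Fin A →₀ ℕ) (c : ℂ) :
    l.foldr (fun μ Q => (fun Q' => pderiv μ Q')^[k μ] Q) (monomial e c) =
      monomial (e - ∑ μ ∈ l.toFinset, Finsupp.single μ (k μ))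
        (c * ∏ μ ∈ l.toFinset, ((e μ).descFactorial (k μ) : ℂ)) := by
  induction l with
  | nil => simp
  | cons μ t ih =>
    obtain ⟨hμt, hnd⟩ := List.nodup_cons.1 hl
    have hμt' : μ ∉ t.toFinset := List.mem_toFinset.not.2 hμt
    have hfix : (e - ∑ ν ∈ t.toFinset, Finsupp.single ν (k ν)) μ = e μ := by
      rw [Finsupp.tsub_apply, Finsupp.finsetSum_apply,
        Finset.sum_eq_zero fun ν hν => Finsupp.single_eq_of_ne' (ne_of_mem_of_not_mem hν hμt'),
        tsub_zero]
    rw [List.foldr_cons, ih hnd, iterate_pderiv_monomial, hfix, List.toFinset_cons,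
      Finset.sum_insert hμt', Finset.prod_insert hμt', tsub_tsub, add_comm, mul_assoc,
      mul_comm (∏ ν ∈ _, _)]

lemma pdPow_monomial (k : Fin A → ℕ) (e : Fin A →₀ ℕ) (c : ℂ) :
    pdPow k (monomial e c) =
      monomial (e - Finsupp.equivFunOnFinite.symm k)
        (c * ∏ μ, ((e μ).descFactorial (k μ) : ℂ)) := by
  rw [pdPow, foldr_iterate_pderiv_monomial k (List.nodup_finRange A), List.toFinset_finRange,
    Finsupp.equivFunOnFinite_symm_eq_sum]

end Derivatives

section Blocks

variable {M A : ℕ} (N : Fin M → ℕ)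

lemma blockStart_eq_sum_Iio (α : Fin M) : blockStart N α = ∑ β ∈ Finset.Iio α, N β := by
  rw [blockStart, Finset.filter_gt_eq_Iio]

lemma blockStart_add_self (α : Fin M) : blockStart N α + N α = ∑ β ∈ Finset.Iic α, N β := by
  rw [blockStart_eq_sum_Iio, ← Finset.Iio_insert, Finset.sum_insert Finset.notMem_Iio_self,
    add_comm]

lemma blockStart_add_le {α β : Fin M} (h : α < β) : blockStart N α + N α ≤ blockStart N β := by
  rw [blockStart_add_self, blockStart_eq_sum_Iio]
  exact Finset.sum_le_sum_of_subset fun γ hγ =>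
    Finset.mem_Iio.2 ((Finset.mem_Iic.1 hγ).trans_lt h)

lemma inBlock_unique {α β : Fin M} {μ : Fin A} (hα : inBlock N α μ) (hβ : inBlock N β μ) :
    α = β := by
  by_contra hne
  rcases lt_or_gt_of_ne hne with h | h <;> have := blockStart_add_le N h <;>
    simp only [inBlock] at hα hβ <;> omega

lemma exists_inBlock (hA : ∑ α, N α = A) (μ : Fin A) : ∃ α, inBlock N α μ := by
  obtain _ | M := M
  · simp only [Finset.univ_eq_empty, Finset.sum_empty] at hA
    exact absurd μ.isLt (by omega)
  set S := Finset.univ.filter fun α : Fin (M + 1) => blockStart N α ≤ μ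
  have h0 : 0 ∈ S := by
    simp [S, blockStart_eq_sum_Iio, (Finset.Iio_eq_empty (a := (0 : Fin (M + 1)))).2 isMin_bot]
  set α := S.max' ⟨0, h0⟩
  have hαS : α ∈ S := S.max'_mem _
  refine ⟨α, (Finset.mem_filter.1 hαS).2, ?_⟩
  by_contra! hle
  by_cases hmax : IsMax α
  · have huniv : Finset.Iic α = Finset.univ :=
      Finset.eq_univ_of_forall fun β => Finset.mem_Iic.2 (not_lt.1 hmax.not_lt)
    rw [blockStart_add_self, huniv, hA] at hle
    exact absurd μ.isLt (by omega)
  · have hsucc : Order.succ α ∈ S := by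
      simp only [S, Finset.mem_filter, Finset.mem_univ, true_and]
      rwa [blockStart_eq_sum_Iio, Finset.Iio_succ_eq_Iic_of_not_isMax hmax, ← blockStart_add_self]
    exact absurd (S.le_max' _ hsucc) (not_le.2 (Order.lt_succ_of_not_isMax hmax))

lemma sum_eq_sum_sum_inBlock {β : Type*} [AddCommMonoid β]
    (hcov : ∀ μ : Fin A, ∃ α, inBlock N α μ) (F : Fin A → β) :
    ∑ μ, F μ = ∑ α, ∑ μ ∈ Finset.univ.filter (inBlock N α), F μ := by
  simp_rw [Finset.sum_filter]
  rw [Finset.sum_comm]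
  refine Finset.sum_congr rfl fun μ _ => ?_
  obtain ⟨α, hα⟩ := hcov μ
  rw [Finset.sum_eq_single α (fun β _ hβ => if_neg fun h => hβ (inBlock_unique N h hα))
    (by simp), if_pos hα]

end Blocks

section Rigidity

variable {M A : ℕ} {N : Fin M → ℕ}

lemma sum_coe_mul_le_sum_coe_perm_mul {g : Fin A → ℤ}
    (hg : ∀ μ ν, sameBlock N μ ν → μ ≤ ν → g ν ≤ g μ) {σ : Equiv.Perm (Fin A)}
    (hσ : ∀ μ, sameBlock N μ (σ μ)) :
    ∑ μ : Fin A, (μ : ℤ) * g μ ≤ ∑ μ, (σ μ : ℤ) * g μ := by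
  have hcov : ∀ μ, ∃ α, inBlock N α μ := fun μ => (hσ μ).imp fun _ h => h.1
  rw [sum_eq_sum_sum_inBlock N hcov, sum_eq_sum_sum_inBlock N hcov]
  refine Finset.sum_le_sum fun α _ => ?_
  refine AntivaryOn.sum_mul_le_sum_comp_perm_mul_of_mem_iff (f := fun μ : Fin A => (μ : ℤ))
    (fun μ hμ ν hν hlt => ?_) fun μ => ?_
  · simp only [Finset.coe_filter, Finset.mem_univ, true_and, Set.mem_ofPred_eq] at hμ hν
    by_contra! h
    exact (hg μ ν ⟨α, hμ, hν⟩ (Fin.le_def.2 (by omega))).not_gt hlt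
  · obtain ⟨β, hμ, hσμ⟩ := hσ μ
    simp only [Finset.mem_filter, Finset.mem_univ, true_and]
    exact ⟨fun h => inBlock_unique N hσμ h ▸ hμ, fun h => inBlock_unique N hμ h ▸ hσμ⟩

lemma perm_eq_of_coe_apply_eq_add_sub {g : Fin A → ℤ}
    (hg : ∀ μ ν, sameBlock N μ ν → μ ≤ ν → g ν ≤ g μ) {σ τ : Equiv.Perm (Fin A)}
    (hσ : ∀ μ, sameBlock N μ (σ μ)) (hτ : ∀ μ, (τ μ : ℤ) = σ μ + (g μ - g (σ μ))) :
    τ = σ := by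
  set d : Fin A → ℤ := fun μ => g μ - g (σ μ)
  have hsq : ∑ μ, ((τ μ : ℤ)) ^ 2 = ∑ μ, ((σ μ : ℤ)) ^ 2 := by
    rw [Equiv.sum_comp τ fun μ => ((μ : ℤ)) ^ 2, Equiv.sum_comp σ fun μ => ((μ : ℤ)) ^ 2]
  have hrearr : 0 ≤ ∑ μ, (σ μ : ℤ) * d μ := by
    have hshift : ∑ μ, (σ μ : ℤ) * g (σ μ) = ∑ μ : Fin A, (μ : ℤ) * g μ :=
      Equiv.sum_comp σ fun μ => (μ : ℤ) * g μ
    simp only [d, mul_sub, Finset.sum_sub_distrib, hshift, sub_nonneg]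
    exact sum_coe_mul_le_sum_coe_perm_mul hg hσ
  have hd : ∑ μ, d μ ^ 2 = -2 * ∑ μ, (σ μ : ℤ) * d μ := by
    simp only [hτ] at hsq
    rw [Finset.mul_sum, ← sub_eq_zero, ← Finset.sum_sub_distrib, ← sub_eq_zero.2 hsq,
      ← Finset.sum_sub_distrib]
    exact Finset.sum_congr rfl fun μ _ => by ring
  have hd0 : ∀ μ, d μ = 0 := by
    have := (Finset.sum_eq_zero_iff_of_nonneg fun μ _ => sq_nonneg (d μ)).1
      (le_antisymm (by linarith) (Finset.sum_nonneg fun μ _ => sq_nonneg (d μ)))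
    exact fun μ => pow_eq_zero_iff two_ne_zero |>.1 (this μ (Finset.mem_univ μ))
  ext μ
  have := hτ μ
  have := hd0 μ
  simp only [d] at this
  omega

end Rigidity

section Coefficient

variable {M A : ℕ} {N : Fin M → ℕ} {n : Fin A → ℕ}

lemma coe_sub_le_coe_sub_of_sameBlock (h2 : ∀ μ ν : Fin A, sameBlock N μ ν → μ < ν → n μ < n ν)
    {μ ν : Fin A} (hμν : sameBlock N μ ν) (hle : μ ≤ ν) : (ν : ℤ) - n ν ≤ (μ : ℤ) - n μ := by
  obtain ⟨α, hμ, hν⟩ := hμν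
  obtain ⟨d, hd⟩ : ∃ d, (ν : ℕ) = μ + d := ⟨ν - μ, by rw [Fin.le_def] at hle; omega⟩
  clear hle
  induction d generalizing ν with
  | zero => rw [Fin.ext (hd.trans (add_zero _))]
  | succ d ih =>
    set ν' : Fin A := ⟨μ + d, by omega⟩
    have hν'v : (ν' : ℕ) = μ + d := rfl
    have hν' : inBlock N α ν' := by
      simp only [inBlock] at hμ hν ⊢
      omega
    have hprev := ih hν' hν'v
    have hstep := h2 ν' ν ⟨α, hν', hν⟩ (Fin.lt_def.2 (by omega))
    omega

lemma coeff_pdPow_comp_perm_vand (h1 : ∀ μ, n μ ≤ (μ : ℕ))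
    (h2 : ∀ μ ν : Fin A, sameBlock N μ ν → μ < ν → n μ < n ν) {σ : Equiv.Perm (Fin A)}
    (hσ : ∀ μ, sameBlock N μ (σ μ)) :
    coeff (Finsupp.equivFunOnFinite.symm fun μ : Fin A => (μ : ℕ) - n μ)
        (pdPow (n ∘ σ) (vand A)) =
      if ∀ μ, (σ μ : ℕ) - n (σ μ) = μ - n μ then
        (-1) ^ (Finset.univ.filter fun p : Fin A × Fin A => p.1 < p.2).card *
          (Equiv.Perm.sign σ : ℂ) * ∏ μ : Fin A, ((μ : ℕ).descFactorial (n μ) : ℂ)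
      else 0 := by
  have hexp : ∀ τ : Equiv.Perm (Fin A),
      (Finsupp.equivFunOnFinite.symm (fun μ => (τ μ : ℕ)) -
          Finsupp.equivFunOnFinite.symm (n ∘ σ) =
        Finsupp.equivFunOnFinite.symm fun μ : Fin A => (μ : ℕ) - n μ) ↔
      ∀ μ, (τ μ : ℕ) - n (σ μ) = μ - n μ := fun τ => by
    simp [Finsupp.ext_iff]
  rw [vand_eq_sum_monomial, pdPow_sum, coeff_sum]
  simp_rw [pdPow_monomial, coeff_monomial, hexp]
  rw [Finset.sum_eq_single σ (fun τ _ hτσ => ?_) (by simp)]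
  · simp only [Finsupp.coe_equivFunOnFinite_symm, Function.comp_apply, mul_assoc]
    rw [Equiv.prod_comp σ fun μ => ((μ : ℕ).descFactorial (n μ) : ℂ)]
  refine ite_eq_right_iff.2 fun hτ => mul_eq_zero_of_right _ (Finset.prod_eq_zero_iff.2 ?_)
  by_contra! hne
  refine hτσ (perm_eq_of_coe_apply_eq_add_sub (g := fun μ => (μ : ℤ) - n μ)
    (fun μ ν => coe_sub_le_coe_sub_of_sameBlock h2) hσ fun μ => ?_)
  -- a nonzero falling factorial gives `n (σ μ) ≤ τ μ`, so the subtraction in `hτ` is exact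
  have hle := Nat.cast_ne_zero.1 (hne μ (Finset.mem_univ μ))
  rw [Ne, Nat.descFactorial_eq_zero_iff_lt, not_lt] at hle
  have := hτ μ
  have := h1 μ
  have := h1 (σ μ)
  simp only [Finsupp.coe_equivFunOnFinite_symm, Function.comp_apply] at hle
  omega

lemma coeff_simpleP (h1 : ∀ μ, n μ ≤ (μ : ℕ))
    (h2 : ∀ μ ν : Fin A, sameBlock N μ ν → μ < ν → n μ < n ν) :
    coeff (Finsupp.equivFunOnFinite.symm fun μ : Fin A => (μ : ℕ) - n μ) (simpleP N n) =
      (-1) ^ (Finset.univ.filter fun p : Fin A × Fin A => p.1 < p.2).card *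
        (∏ μ : Fin A, ((μ : ℕ).descFactorial (n μ) : ℂ)) *
        (Finset.univ.filter fun σ : Equiv.Perm (Fin A) =>
          (∀ μ, sameBlock N μ (σ μ)) ∧ ∀ μ, (σ μ : ℕ) - n (σ μ) = μ - n μ).card := by
  rw [simpleP, coeff_sum, ← Finset.filter_filter, Finset.natCast_card_filter, Finset.mul_sum]
  refine Finset.sum_congr rfl fun σ hσ => ?_
  rw [coeff_smul, coeff_pdPow_comp_perm_vand h1 h2 (Finset.mem_filter.1 hσ).2]
  split_ifs
  · have hsq : ((Equiv.Perm.sign σ : ℤ) : ℂ) * (Equiv.Perm.sign σ : ℤ) = 1 := by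
      rw [← Int.cast_mul, ← Units.val_mul, Int.units_mul_self, Units.val_one, Int.cast_one]
    rw [zsmul_eq_mul]
    linear_combination (-1 : ℂ) ^ (Finset.univ.filter fun p : Fin A × Fin A => p.1 < p.2).card *
      (∏ μ : Fin A, ((μ : ℕ).descFactorial (n μ) : ℂ)) * hsq
  · rw [smul_zero, mul_zero]

end Coefficient

/-- For `n` with `n_μ ≤ μ − 1` (0-based: `n μ ≤ μ`) and strictly increasing within each
species block, the coefficient of the monomial `∏_μ z_μ^{μ−1−n_μ}` in `P(n)` is
nonzero. -/
theorem simpleP_leading_coeff_ne_zero (M A : ℕ) (N : Fin M → ℕ) (hA : ∑ α, N α = A)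
    (n : Fin A → ℕ) (h1 : ∀ μ, n μ ≤ (μ : ℕ))
    (h2 : ∀ μ ν : Fin A, sameBlock N μ ν → μ < ν → n μ < n ν) :
    MvPolynomial.coeff (Finsupp.equivFunOnFinite.symm fun μ : Fin A => (μ : ℕ) - n μ)
      (simpleP N n) ≠ 0 := by
  rw [coeff_simpleP h1 h2]
  have hid : (1 : Equiv.Perm (Fin A)) ∈ Finset.univ.filter fun σ : Equiv.Perm (Fin A) =>
      (∀ μ, sameBlock N μ (σ μ)) ∧ ∀ μ, (σ μ : ℕ) - n (σ μ) = μ - n μ :=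
    Finset.mem_filter.2 ⟨Finset.mem_univ _,
      fun μ => (exists_inBlock N hA μ).imp fun _ h => ⟨h, h⟩, fun _ => rfl⟩
  have hfact : ∏ μ : Fin A, ((μ : ℕ).descFactorial (n μ) : ℂ) ≠ 0 :=
    Finset.prod_ne_zero_iff.2 fun μ _ =>
      Nat.cast_ne_zero.2 (Nat.descFactorial_eq_zero_iff_lt.not.2 (not_lt.2 (h1 μ)))
  exact mul_ne_zero (mul_ne_zero (pow_ne_zero _ (by norm_num)) hfact)
    (Nat.cast_ne_zero.2 (Finset.card_ne_zero_of_mem hid))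
end
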